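/- arXiv:2601.18279 — 3 statements merged into one kernel-verified Lean document; each statement's English description precedes it below -/
import Mathlib

section
/- If A is Schur stable and (A,b) is reachable, then for any r ≤ n distinct frequencies θ_1, ..., θ_r ∈ [0, 2π), with G(z) = z(zI-A)^{-1}b and 𝐆(θ) = [G(e^{iθ_1}), ..., G(e^{iθ_r})], the vectors G(e^{iθ_1}), ..., G(e^{iθ_r}) are linearly independent; in particular 𝐆(θ) has rank r. -/
open Matrix Complex Polynomial Finset

private lemma gfilter_sum_mulVec {n : ℕ} {ι : Type*} (s : Finset ι)
    (f : ι → Matrix (Fin n) (Fin n) ℂ) (v : Fin n → ℂ) :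
    (∑ i ∈ s, f i) *ᵥ v = ∑ i ∈ s, f i *ᵥ v := by
  induction s using Finset.cons_induction with
  | empty => simp
  | cons a s ha ih => simp [Matrix.add_mulVec, ih]

private lemma gfilter_mulVec_sum {n : ℕ} {ι : Type*} (s : Finset ι)
    (A : Matrix (Fin n) (Fin n) ℂ) (v : ι → Fin n → ℂ) :
    A *ᵥ (∑ i ∈ s, v i) = ∑ i ∈ s, A *ᵥ v i := by
  induction s using Finset.cons_induction with
  | empty => simp
  | cons a s ha ih => simp [Matrix.mulVec_add, ih]

theorem gfilter_vectors_linearIndependent (n r : ℕ)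
    (A : Matrix (Fin n) (Fin n) ℂ) (b : Fin n → ℂ)
    (hA : ∀ μ ∈ spectrum ℂ A, ‖μ‖ < 1)
    (hreach : (Matrix.of fun (i : Fin n) (j : Fin n) =>
        (A ^ (j : ℕ)).mulVec b i).rank = n)
    (hr : r ≤ n) (θ : Fin r → ℝ)
    (hθmem : ∀ k, θ k ∈ Set.Ico 0 (2 * Real.pi))
    (hθinj : Function.Injective θ) :
    let g : Fin r → Fin n → ℂ := fun k =>
      Complex.exp (θ k * Complex.I) •
        (Complex.exp (θ k * Complex.I) • (1 : Matrix (Fin n) (Fin n) ℂ) - A)⁻¹.mulVec b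
    LinearIndependent ℂ g ∧
      (Matrix.of fun (i : Fin n) (k : Fin r) => g k i).rank = r := by
  intro g
  classical
  set z : Fin r → ℂ := fun k => Complex.exp (θ k * Complex.I) with hzdef
  -- z injective
  have hzinj : Function.Injective z := by
    intro j k h
    simp only [hzdef, Complex.exp_eq_exp_iff_exists_int] at h
    obtain ⟨m, hm⟩ := h
    apply hθinj
    have hI : ((θ j : ℂ)) = ((θ k + m * (2 * Real.pi) : ℝ) : ℂ) := by
      have h2 : (θ j : ℂ) * I = ((θ k + m * (2 * Real.pi) : ℝ) : ℂ) * I := by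
        rw [hm]; push_cast; ring
      exact mul_right_cancel₀ Complex.I_ne_zero h2
    have hre : (θ j : ℝ) = θ k + m * (2 * Real.pi) := by exact_mod_cast hI
    obtain ⟨hj0, hj2⟩ := hθmem j; obtain ⟨hk0, hk2⟩ := hθmem k
    have hpi := Real.two_pi_pos
    have hm0 : m = 0 := by
      have h3 : (m : ℝ) * (2 * Real.pi) < 2 * Real.pi := by linarith
      have h4 : -(2 * Real.pi) < (m : ℝ) * (2 * Real.pi) := by linarith
      have hlt : (m : ℝ) < 1 := by nlinarith
      have hgt : (-1 : ℝ) < m := by nlinarith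
      have h5 : m < 1 := by exact_mod_cast hlt
      have h6 : (-1 : ℤ) < m := by exact_mod_cast hgt
      omega
    rw [hm0] at hre; simpa using hre
  have hznz : ∀ k, z k ≠ 0 := fun k => Complex.exp_ne_zero _
  -- the matrices z k • 1 - A are invertible
  set M : Fin r → Matrix (Fin n) (Fin n) ℂ :=
    fun k => z k • (1 : Matrix (Fin n) (Fin n) ℂ) - A with hMdef
  have hUnit : ∀ k, IsUnit (M k) := by
    intro k
    have hnorm : ‖z k‖ = 1 := by
      simp [hzdef, Complex.norm_exp_ofReal_mul_I]
    have hnotmem : z k ∉ spectrum ℂ A := by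
      intro hmem
      have := hA _ hmem
      rw [hnorm] at this; exact absurd this (by norm_num)
    rw [spectrum.notMem_iff] at hnotmem
    rwa [Algebra.algebraMap_eq_smul_one] at hnotmem
  have hUnitDet : ∀ k, IsUnit (M k).det :=
    fun k => (Matrix.isUnit_iff_isUnit_det _).mp (hUnit k)
  have hMinv : ∀ k, M k * (M k)⁻¹ = 1 := fun k => Matrix.mul_nonsing_inv _ (hUnitDet k)
  have hMaeval : ∀ k, M k = Polynomial.aeval A (C (z k) - X) := by
    intro k
    simp [hMdef, map_sub, Polynomial.aeval_C, Polynomial.aeval_X,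
      Algebra.algebraMap_eq_smul_one]
  -- main: linear independence
  have hli : LinearIndependent ℂ g := by
    rw [Fintype.linearIndependent_iff]
    intro c hc k
    -- the polynomial q
    set q : ℂ[X] := ∑ m, C (c m * z m) * ∏ j ∈ univ.erase m, (C (z j) - X) with hqdef
    have hrpos : 0 < r := k.pos
    -- degree bound
    have hqdeg : q.natDegree < n := by
      have h1 : q.natDegree ≤ r - 1 := by
        refine (Polynomial.natDegree_sum_le _ _).trans ?_
        rw [Finset.fold_max_le]
        constructor
        · omega
        · intro m _
          refine (Polynomial.natDegree_mul_le).trans ?_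
          rw [Polynomial.natDegree_C, zero_add]
          refine (Polynomial.natDegree_prod_le _ _).trans ?_
          refine (Finset.sum_le_card_nsmul _ _ 1 ?_).trans ?_
          · intro j _
            exact (Polynomial.natDegree_sub_le _ _).trans (by simp)
          · simp [Finset.card_erase_of_mem]
      omega
    -- applying aeval A of the full product to the relation
    have hP : (Polynomial.aeval A q).mulVec b = 0 := by
      have hPg : ∀ m : Fin r,
          (Polynomial.aeval A (∏ j, (C (z j) - X))).mulVec (g m)
            = z m • (Polynomial.aeval A (∏ j ∈ univ.erase m, (C (z j) - X))).mulVec b := by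
        intro m
        have hsplit : (∏ j, (C (z j) - X)) =
            (∏ j ∈ univ.erase m, (C (z j) - X)) * (C (z m) - X) :=
          (Finset.prod_erase_mul _ _ (Finset.mem_univ m)).symm
        show (Polynomial.aeval A (∏ j, (C (z j) - X))).mulVec
            (z m • (M m)⁻¹.mulVec b) = _
        rw [Matrix.mulVec_smul, hsplit, _root_.map_mul, ← hMaeval, ← Matrix.mulVec_mulVec,
          Matrix.mulVec_mulVec b (M m) (M m)⁻¹, hMinv, Matrix.one_mulVec]
      have h0 := congrArg (fun v => (Polynomial.aeval A (∏ j, (C (z j) - X))).mulVec v) hc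
      simp only [Matrix.mulVec_zero] at h0
      have h1 : (Polynomial.aeval A (∏ j, (C (z j) - X))).mulVec (∑ m, c m • g m)
          = ∑ m, (c m * z m) •
            (Polynomial.aeval A (∏ j ∈ univ.erase m, (C (z j) - X))).mulVec b := by
        rw [gfilter_mulVec_sum]
        refine Finset.sum_congr rfl (fun m _ => ?_)
        rw [Matrix.mulVec_smul, hPg m, smul_smul]
      rw [h1] at h0
      rw [hqdef, map_sum, gfilter_sum_mulVec]
      rw [← h0]
      refine Finset.sum_congr rfl (fun m _ => ?_)
      rw [_root_.map_mul, Polynomial.aeval_C, ← Algebra.smul_def, Matrix.smul_mulVec]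
    -- reachability: q = 0
    have hq0 : q = 0 := by
      set K : Matrix (Fin n) (Fin n) ℂ := Matrix.of fun (i : Fin n) (j : Fin n) =>
        (A ^ (j : ℕ)).mulVec b i with hKdef
      set a : Fin n → ℂ := fun j => q.coeff j with hadef
      have hKa : K *ᵥ a = 0 := by
        have heval : Polynomial.aeval A q = ∑ i ∈ Finset.range n, q.coeff i • A ^ i :=
          Polynomial.aeval_eq_sum_range' hqdeg A
        have : (Polynomial.aeval A q).mulVec b
            = ∑ i ∈ Finset.range n, q.coeff i • (A ^ i).mulVec b := by
          rw [heval, gfilter_sum_mulVec]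
          exact Finset.sum_congr rfl (fun i _ => Matrix.smul_mulVec _ _ _)
        rw [this] at hP
        rw [← hP, ← Fin.sum_univ_eq_sum_range (fun i => q.coeff i • (A ^ i).mulVec b) n]
        funext i
        simp only [Matrix.mulVec, dotProduct, hKdef, Matrix.of_apply,
          Finset.sum_apply, Pi.smul_apply, smul_eq_mul, hadef]
        exact Finset.sum_congr rfl (fun j _ => mul_comm _ _)
      have ha0 : a = 0 := by
        have htop : LinearMap.range K.mulVecLin = ⊤ := by
          apply Submodule.eq_top_of_finrank_eq
          rw [← Matrix.rank, hreach, Module.finrank_pi, Fintype.card_fin]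
        have hsurj : Function.Surjective K.mulVecLin := LinearMap.range_eq_top.mp htop
        have hinj : Function.Injective K.mulVecLin :=
          (LinearMap.injective_iff_surjective).mpr hsurj
        have : K.mulVecLin a = K.mulVecLin 0 := by
          simpa [Matrix.mulVecLin_apply] using hKa
        exact hinj this
      ext i
      rcases lt_or_ge i n with hi | hi
      · have := congrFun ha0 ⟨i, hi⟩
        simpa [hadef] using this
      · simp [Polynomial.coeff_eq_zero_of_natDegree_lt (lt_of_lt_of_le hqdeg hi)]
    -- evaluate q at z k
    have heval : q.eval (z k) = c k * z k * ∏ j ∈ univ.erase k, (z j - z k) := by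
      rw [hqdef]
      simp only [Polynomial.eval_finset_sum, Polynomial.eval_mul, Polynomial.eval_C,
        Polynomial.eval_prod, Polynomial.eval_sub, Polynomial.eval_X]
      rw [Finset.sum_eq_single k]
      · intro m _ hmk
        have : z k - z k = 0 := sub_self _
        rw [Finset.prod_eq_zero (Finset.mem_erase.mpr ⟨Ne.symm hmk, Finset.mem_univ k⟩) this]
        ring
      · intro h; exact absurd (Finset.mem_univ k) h
    have hprod : (∏ j ∈ univ.erase k, (z j - z k)) ≠ 0 := by
      rw [Finset.prod_ne_zero_iff]
      intro j hj
      have hjk : j ≠ k := (Finset.mem_erase.mp hj).1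
      exact sub_ne_zero_of_ne (fun hzz => hjk (hzinj hzz))
    have : c k * z k * ∏ j ∈ univ.erase k, (z j - z k) = 0 := by
      rw [← heval, hq0, Polynomial.eval_zero]
    rcases mul_eq_zero.mp this with h | h
    · rcases mul_eq_zero.mp h with h | h
      · exact h
      · exact absurd h (hznz k)
    · exact absurd h hprod
  refine ⟨hli, ?_⟩
  -- rank statement
  rw [Matrix.rank_eq_finrank_span_cols]
  have hT : (Matrix.of fun (i : Fin n) (k : Fin r) => g k i)ᵀ = fun k => g k := by
    ext k i; simp [Matrix.transpose_apply]
  rw [show (Matrix.of fun (i : Fin n) (k : Fin r) => g k i).col = fun k => g k from hT]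
  rw [finrank_span_eq_card hli, Fintype.card_fin]
end

section
/- Uniqueness in the Carathéodory–Fejér-type decomposition: let A be Schur stable, (A,b) reachable, and suppose Σ = Σ_{k=1}^r ρ_k G(e^{iθ_k}) G(e^{iθ_k})* = Σ_{k=1}^s σ_k G(e^{iφ_k}) G(e^{iφ_k})* with ρ_k, σ_k > 0, the θ_k distinct, the φ_k distinct, and r, s < n. Then r = s and, after a permutation, θ_k = φ_k and ρ_k = σ_k for all k. -/
open Matrix Complex Polynomial

lemma exp_mul_I_inj {a c : ℝ} (ha : a ∈ Set.Ico 0 (2*Real.pi)) (hc : c ∈ Set.Ico 0 (2*Real.pi))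
    (h : Complex.exp ((a:ℂ) * I) = Complex.exp ((c:ℂ) * I)) : a = c := by
  rw [Complex.exp_eq_exp_iff_exists_int] at h
  obtain ⟨k, hk⟩ := h
  have hk' : (a:ℂ) = (c:ℂ) + k * (2*Real.pi) := by
    have hI : (I:ℂ) ≠ 0 := I_ne_zero
    have : (a:ℂ) * I = ((c:ℂ) + k*(2*Real.pi)) * I := by rw [hk]; ring
    exact mul_right_cancel₀ hI this
  have hre : a = c + k * (2*Real.pi) := by exact_mod_cast hk'
  have hpi := Real.pi_pos
  have hk0 : k = 0 := by
    rcases lt_trichotomy k 0 with h1 | h1 | h1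
    · have h2 : k ≤ -1 := by omega
      have : (k:ℝ) ≤ -1 := by exact_mod_cast h2
      nlinarith [ha.1, ha.2, hc.1, hc.2]
    · exact h1
    · have : (1:ℝ) ≤ (k:ℝ) := by exact_mod_cast h1
      nlinarith [ha.1, ha.2, hc.1, hc.2]
  rw [hk0] at hre; simpa using hre
open Matrix Complex Polynomial

lemma exists_dual_vec {n m : ℕ} {v : Fin m → (Fin n → ℂ)}
    (hv : LinearIndependent ℂ v) (k : Fin m) :
    ∃ w : Fin n → ℂ, ∀ j, v j ⬝ᵥ w = if j = k then 1 else 0 := by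
  set S := Submodule.span ℂ (Set.range v)
  let B : Module.Basis (Fin m) ℂ S := Module.Basis.span hv
  obtain ⟨g, hg⟩ := LinearMap.exists_extend (B.coord k)
  refine ⟨fun i => g (Pi.single i 1), fun j => ?_⟩
  have hvj : g (v j) = if j = k then 1 else 0 := by
    have hmem : v j ∈ S := Submodule.subset_span ⟨j, rfl⟩
    have h1 : g (v j) = (B.coord k) ⟨v j, hmem⟩ := by
      have := congrFun (congrArg (fun (f : S →ₗ[ℂ] ℂ) => (f : S → ℂ)) hg) ⟨v j, hmem⟩
      simpa using this
    have h2 : (⟨v j, hmem⟩ : S) = B j := by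
      apply Subtype.ext
      exact congrArg Subtype.val (Module.Basis.span_apply hv j).symm
    rw [h1, h2, Module.Basis.coord_apply, Module.Basis.repr_self]
    simp [Finsupp.single_apply, eq_comm]
  calc v j ⬝ᵥ (fun i => g (Pi.single i 1))
      = g (v j) := by
        rw [dotProduct]
        have hdec : v j = ∑ i, (v j i) • (Pi.single i 1 : Fin n → ℂ) := by
          ext x
          simp [Pi.single_apply, Finset.sum_ite_eq']
        conv_rhs => rw [hdec]
        rw [map_sum]
        simp [smul_eq_mul]
    _ = _ := hvj
open Matrix Complex Polynomial

lemma quad_eval {n m : ℕ} (w : Fin n → ℂ) (c : Fin m → ℝ) (v : Fin m → Fin n → ℂ) :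
    ∑ i, ∑ j, w i * (starRingEnd ℂ) (w j) *
      (∑ k, (c k : ℂ) • Matrix.vecMulVec (v k) (star (v k))) i j
    = ∑ k, ((c k * Complex.normSq (v k ⬝ᵥ w) : ℝ) : ℂ) := by
  have hentry : ∀ i j, (∑ k, (c k : ℂ) • Matrix.vecMulVec (v k) (star (v k))) i j
      = ∑ k, (c k : ℂ) * (v k i * (starRingEnd ℂ) (v k j)) := by
    intro i j
    simp [Matrix.sum_apply, Matrix.vecMulVec_apply, Pi.star_apply, RCLike.star_def]
  simp only [hentry, Finset.mul_sum]
  have swap : ∀ (F : Fin n → Fin n → Fin m → ℂ),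
      ∑ i, ∑ j, ∑ k, F i j k = ∑ k, ∑ i, ∑ j, F i j k := by
    intro F
    calc ∑ i, ∑ j, ∑ k, F i j k
        = ∑ i, ∑ k, ∑ j, F i j k := by
          exact Finset.sum_congr rfl fun i _ => Finset.sum_comm
      _ = ∑ k, ∑ i, ∑ j, F i j k := by exact Finset.sum_comm
  rw [show (∑ i, ∑ j, ∑ k, w i * (starRingEnd ℂ) (w j) *
      ((c k : ℂ) * (v k i * (starRingEnd ℂ) (v k j))))
      = ∑ k, ∑ i, ∑ j, w i * (starRingEnd ℂ) (w j) *
      ((c k : ℂ) * (v k i * (starRingEnd ℂ) (v k j))) from swap _]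
  apply Finset.sum_congr rfl
  intro k _
  have : ((c k * Complex.normSq (v k ⬝ᵥ w) : ℝ) : ℂ)
      = (c k : ℂ) * ((v k ⬝ᵥ w) * (starRingEnd ℂ) (v k ⬝ᵥ w)) := by
    rw [Complex.mul_conj]; push_cast; ring
  rw [this, dotProduct, map_sum, Finset.sum_mul_sum, Finset.mul_sum]
  apply Finset.sum_congr rfl
  intro i _
  rw [Finset.mul_sum]
  apply Finset.sum_congr rfl
  intro j _
  simp only [_root_.map_mul]
  ring
open Matrix Complex Polynomial

lemma gvec_li {n m : ℕ} (A : Matrix (Fin n) (Fin n) ℂ) (b : Fin n → ℂ)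
    (hA : ∀ μ ∈ spectrum ℂ A, ‖μ‖ < 1)
    (hreach : (Matrix.of fun (i : Fin n) (j : Fin n) => (A ^ (j : ℕ)).mulVec b i).rank = n)
    (hm : m ≤ n) (z : Fin m → ℂ)
    (hz1 : ∀ j, ‖z j‖ = 1) (hzinj : Function.Injective z) :
    LinearIndependent ℂ
      (fun j => z j • ((z j • (1 : Matrix (Fin n) (Fin n) ℂ) - A)⁻¹.mulVec b)) := by
  rcases Nat.eq_zero_or_pos m with hm0 | hm1
  · subst hm0
    exact linearIndependent_empty_type
  have hn1 : 0 < n := lt_of_lt_of_le hm1 hm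
  -- invertibility
  have hInv : ∀ j, IsUnit (z j • (1 : Matrix (Fin n) (Fin n) ℂ) - A).det := by
    intro j
    have hns : z j ∉ spectrum ℂ A := by
      intro hmem
      have := hA (z j) hmem
      rw [hz1 j] at this; exact lt_irrefl _ this
    rw [spectrum.notMem_iff] at hns
    rw [← Matrix.isUnit_iff_isUnit_det]
    convert hns using 2
    rw [Algebra.algebraMap_eq_smul_one]
  rw [Fintype.linearIndependent_iff]
  intro c hc j₀
  set w : Fin m → (Fin n → ℂ) :=
    fun j => ((z j • (1 : Matrix (Fin n) (Fin n) ℂ) - A)⁻¹).mulVec b with hw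
  set q : Fin m → Polynomial ℂ := fun j => C (z j) - X with hq
  have haq : ∀ j, aeval A (q j) = z j • (1 : Matrix (Fin n) (Fin n) ℂ) - A := by
    intro j
    simp [hq, Algebra.algebraMap_eq_smul_one]
  set p : Polynomial ℂ :=
    ∑ j, C (c j * z j) * ∏ k ∈ Finset.univ.erase j, q k with hp
  -- degree bound
  have hdegq : ∀ k, (q k).natDegree ≤ 1 := by
    intro k
    refine le_trans (natDegree_sub_le _ _) ?_
    simp
  have hdeg : p.natDegree < n := by
    have : ∀ j ∈ Finset.univ, (C (c j * z j) * ∏ k ∈ Finset.univ.erase j, q k).natDegree ≤ n - 1 := by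
      intro j _
      refine le_trans (natDegree_mul_le) ?_
      rw [natDegree_C, zero_add]
      refine le_trans (natDegree_prod_le _ _) ?_
      refine le_trans (Finset.sum_le_card_nsmul _ _ 1 (fun k _ => hdegq k)) ?_
      simp only [smul_eq_mul, mul_one]
      have : (Finset.univ.erase j).card = m - 1 := by
        rw [Finset.card_erase_of_mem (Finset.mem_univ j), Finset.card_univ, Fintype.card_fin]
      omega
    have := Polynomial.natDegree_sum_le_of_forall_le Finset.univ _ this
    rw [← hp] at this
    omega
  have hsumv : ∀ (M : Matrix (Fin n) (Fin n) ℂ) (f : Fin m → (Fin n → ℂ)),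
      M.mulVec (∑ j, f j) = ∑ j, M.mulVec (f j) := by
    intro M f
    simp only [← Matrix.mulVecLin_apply, map_sum]
  have hsumM : ∀ {α : Type} (s : Finset α) (f : α → Matrix (Fin n) (Fin n) ℂ) (v : Fin n → ℂ),
      (∑ j ∈ s, f j).mulVec v = ∑ j ∈ s, (f j).mulVec v := by
    intro α s f v
    funext i
    simp only [Matrix.mulVec, dotProduct, Matrix.sum_apply, Finset.sum_apply, Finset.sum_mul]
    exact Finset.sum_comm
  -- the key vanishing
  have hkey : (aeval A p).mulVec b = 0 := by
    have hzero : (aeval A (∏ k, q k)).mulVec (∑ j, c j • (z j • w j)) = 0 := by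
      rw [hc, Matrix.mulVec_zero]
    have hterm : ∀ j, (aeval A (∏ k, q k)).mulVec (c j • (z j • w j))
        = (c j * z j) • ((aeval A (∏ k ∈ Finset.univ.erase j, q k)).mulVec b) := by
      intro j
      have hsplit : (∏ k, q k) = (∏ k ∈ Finset.univ.erase j, q k) * q j :=
        (Finset.prod_erase_mul _ _ (Finset.mem_univ j)).symm
      have hBw : (z j • (1 : Matrix (Fin n) (Fin n) ℂ) - A).mulVec (w j) = b := by
        show (z j • (1 : Matrix (Fin n) (Fin n) ℂ) - A).mulVec
          (((z j • (1 : Matrix (Fin n) (Fin n) ℂ) - A)⁻¹).mulVec b) = b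
        rw [Matrix.mulVec_mulVec, Matrix.mul_nonsing_inv _ (hInv j), Matrix.one_mulVec]
      rw [Matrix.mulVec_smul, Matrix.mulVec_smul, hsplit, _root_.map_mul, haq,
        ← Matrix.mulVec_mulVec, hBw, smul_smul]
    rw [hsumv] at hzero
    simp only [hterm] at hzero
    rw [hp, map_sum, hsumM]
    convert hzero using 2 with j
    rw [_root_.map_mul, aeval_C, Algebra.algebraMap_eq_smul_one, Matrix.smul_mul,
      Matrix.one_mul, Matrix.smul_mulVec]
  -- controllability
  have hcoeff : ∀ d : Fin n, p.coeff (d : ℕ) = 0 := by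
    have hexp : (Matrix.of fun (i : Fin n) (j : Fin n) => (A ^ (j : ℕ)).mulVec b i).mulVec
        (fun j : Fin n => p.coeff (j : ℕ)) = 0 := by
      rw [aeval_eq_sum_range' hdeg, hsumM] at hkey
      funext i
      have := congrFun hkey i
      simp only [Finset.sum_apply, Pi.zero_apply] at this ⊢
      rw [Matrix.mulVec, dotProduct, ← this]
      simp only [Matrix.of_apply]
      rw [Fin.sum_univ_eq_sum_range (fun j => (A ^ j *ᵥ b) i * p.coeff j)]
      apply Finset.sum_congr rfl
      intro x hx
      simp [Matrix.smul_mulVec, smul_eq_mul, mul_comm]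
    -- injectivity of mulVec
    set K := (Matrix.of fun (i : Fin n) (j : Fin n) => (A ^ (j : ℕ)).mulVec b i)
    have hsurj : Function.Surjective K.mulVecLin := by
      rw [← LinearMap.range_eq_top]
      apply Submodule.eq_top_of_finrank_eq
      rw [← Matrix.rank]
      rw [hreach, Module.finrank_pi]
      simp
    have hinj : Function.Injective K.mulVecLin :=
      (LinearMap.injective_iff_surjective).mpr hsurj
    intro d
    have : (fun j : Fin n => p.coeff (j : ℕ)) = 0 := by
      apply hinj
      simpa [Matrix.mulVecLin_apply] using hexp
    exact congrFun this d
  have hp0 : p = 0 := by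
    ext d
    rcases lt_or_ge d n with hd | hd
    · simpa using hcoeff ⟨d, hd⟩
    · simp [Polynomial.coeff_eq_zero_of_natDegree_lt (lt_of_lt_of_le hdeg hd)]
  -- evaluate
  have heval := congrArg (Polynomial.eval (z j₀)) hp0
  rw [hp, Polynomial.eval_finset_sum] at heval
  simp only [eval_mul, eval_C, Polynomial.eval_prod, hq, eval_sub, eval_X, eval_zero] at heval
  rw [Finset.sum_eq_single j₀] at heval
  · have hzne : z j₀ ≠ 0 := by
      intro h0; have := hz1 j₀; rw [h0] at this; simp at this
    have hprodne : (∏ k ∈ Finset.univ.erase j₀, (z k - z j₀)) ≠ 0 := by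
      rw [Finset.prod_ne_zero_iff]
      intro k hk
      exact sub_ne_zero_of_ne (fun h => (Finset.mem_erase.mp hk).1 (hzinj h))
    rcases mul_eq_zero.mp heval with h1 | h2
    · rcases mul_eq_zero.mp h1 with h3 | h4
      · exact h3
      · exact absurd h4 hzne
    · exact absurd h2 hprodne
  · intro j _ hj
    apply mul_eq_zero_of_right
    exact Finset.prod_eq_zero (Finset.mem_erase.mpr ⟨Ne.symm hj, Finset.mem_univ _⟩) (by simp)
  · intro h; exact absurd (Finset.mem_univ j₀) h
open Matrix Complex Polynomial

section
variable {n r s : ℕ}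

lemma subset_step (A : Matrix (Fin n) (Fin n) ℂ) (b : Fin n → ℂ)
    (hA : ∀ μ ∈ spectrum ℂ A, ‖μ‖ < 1)
    (hreach : (Matrix.of fun (i : Fin n) (j : Fin n) => (A ^ (j : ℕ)).mulVec b i).rank = n)
    (hs : s < n)
    (θ : Fin r → ℝ) (φ : Fin s → ℝ)
    (hθmem : ∀ k, θ k ∈ Set.Ico 0 (2 * Real.pi))
    (hφmem : ∀ k, φ k ∈ Set.Ico 0 (2 * Real.pi))
    (hφinj : Function.Injective φ)
    (ρ : Fin r → ℝ) (hρ : ∀ k, 0 < ρ k) (σ : Fin s → ℝ)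
    (G : ℝ → Fin n → ℂ)
    (hG : G = fun (t : ℝ) => Complex.exp ((t : ℂ) * Complex.I) •
        (Complex.exp ((t : ℂ) * Complex.I) • (1 : Matrix (Fin n) (Fin n) ℂ) - A)⁻¹.mulVec b)
    (heq : ∑ k, (ρ k : ℂ) • Matrix.vecMulVec (G (θ k)) (star (G (θ k)))
         = ∑ k, (σ k : ℂ) • Matrix.vecMulVec (G (φ k)) (star (G (φ k)))) :
    ∀ k, ∃ l, φ l = θ k := by
  intro k
  by_contra hcon
  push_neg at hcon
  set t : Fin (s + 1) → ℝ := Fin.cons (θ k) φ with ht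
  have htmem : ∀ j, t j ∈ Set.Ico 0 (2 * Real.pi) := by
    intro j
    refine Fin.cases ?_ ?_ j
    · simpa [ht] using hθmem k
    · intro i; simpa [ht] using hφmem i
  have htinj : Function.Injective t := by
    rw [ht, Fin.cons_injective_iff]
    exact ⟨fun ⟨l, hl⟩ => hcon l hl, hφinj⟩
  set ζ : Fin (s + 1) → ℂ := fun j => Complex.exp ((t j : ℂ) * I) with hζ
  have hζ1 : ∀ j, ‖ζ j‖ = 1 := fun j => by
    rw [hζ]; exact Complex.norm_exp_ofReal_mul_I _
  have hζinj : Function.Injective ζ := by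
    intro a b' hab
    exact htinj (exp_mul_I_inj (htmem a) (htmem b') hab)
  have hLI : LinearIndependent ℂ (fun j => G (t j)) := by
    have := gvec_li A b hA hreach (Nat.succ_le_of_lt hs) ζ hζ1 hζinj
    convert this using 1
    funext j
    rw [hG]
  obtain ⟨w, hwd⟩ := exists_dual_vec hLI 0
  have h1 := congrArg (fun M : Matrix (Fin n) (Fin n) ℂ =>
    ∑ i, ∑ j, w i * (starRingEnd ℂ) (w j) * M i j) heq
  rw [quad_eval w ρ (fun k => G (θ k)), quad_eval w σ (fun k => G (φ k))] at h1
  have hRHS : ∀ l : Fin s, G (φ l) ⬝ᵥ w = 0 := by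
    intro l
    have := hwd l.succ
    rw [if_neg (Fin.succ_ne_zero l)] at this
    have h2 : t l.succ = φ l := by simp [ht]
    rw [← h2]; exact this
  have hLHSk : G (θ k) ⬝ᵥ w = 1 := by
    have := hwd 0
    rw [if_pos rfl] at this
    have h2 : t 0 = θ k := by simp [ht]
    rw [← h2]; exact this
  rw [← Complex.ofReal_sum, ← Complex.ofReal_sum] at h1
  have hre : ∑ j, ρ j * Complex.normSq (G (θ j) ⬝ᵥ w)
      = ∑ l, σ l * Complex.normSq (G (φ l) ⬝ᵥ w) := by exact_mod_cast h1
  have hR0 : ∑ l, σ l * Complex.normSq (G (φ l) ⬝ᵥ w) = 0 := by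
    apply Finset.sum_eq_zero
    intro l _
    rw [hRHS l]
    simp
  have hpos : 0 < ∑ j, ρ j * Complex.normSq (G (θ j) ⬝ᵥ w) := by
    have hterm : ρ k * Complex.normSq (G (θ k) ⬝ᵥ w) = ρ k := by
      rw [hLHSk]; simp
    calc (0:ℝ) < ρ k := hρ k
      _ = ρ k * Complex.normSq (G (θ k) ⬝ᵥ w) := hterm.symm
      _ ≤ ∑ j, ρ j * Complex.normSq (G (θ j) ⬝ᵥ w) := by
          exact Finset.single_le_sum (f := fun j => ρ j * Complex.normSq (G (θ j) ⬝ᵥ w))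
            (fun j _ => mul_nonneg (hρ j).le (Complex.normSq_nonneg _))
            (Finset.mem_univ k)
  rw [hre, hR0] at hpos
  exact lt_irrefl _ hpos

end

theorem gfilter_CF_decomposition_unique (n r s : ℕ)
    (A : Matrix (Fin n) (Fin n) ℂ) (b : Fin n → ℂ)
    (hA : ∀ μ ∈ spectrum ℂ A, ‖μ‖ < 1)
    (hreach : (Matrix.of fun (i : Fin n) (j : Fin n) =>
        (A ^ (j : ℕ)).mulVec b i).rank = n)
    (hr : r < n) (hs : s < n)
    (θ : Fin r → ℝ) (φ : Fin s → ℝ)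
    (hθmem : ∀ k, θ k ∈ Set.Ico 0 (2 * Real.pi))
    (hφmem : ∀ k, φ k ∈ Set.Ico 0 (2 * Real.pi))
    (hθinj : Function.Injective θ) (hφinj : Function.Injective φ)
    (ρ : Fin r → ℝ) (hρ : ∀ k, 0 < ρ k)
    (σ : Fin s → ℝ) (hσ : ∀ k, 0 < σ k)
    (G : ℝ → Fin n → ℂ)
    (hG : G = fun (t : ℝ) => Complex.exp ((t : ℂ) * Complex.I) •
        (Complex.exp ((t : ℂ) * Complex.I) • (1 : Matrix (Fin n) (Fin n) ℂ) - A)⁻¹.mulVec b)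
    (heq : ∑ k, (ρ k : ℂ) • Matrix.vecMulVec (G (θ k)) (star (G (θ k)))
         = ∑ k, (σ k : ℂ) • Matrix.vecMulVec (G (φ k)) (star (G (φ k)))) :
    ∃ e : Fin r ≃ Fin s, ∀ k, φ (e k) = θ k ∧ σ (e k) = ρ k := by
  have hsub1 : ∀ k, ∃ l, φ l = θ k :=
    subset_step A b hA hreach hs θ φ hθmem hφmem hφinj ρ hρ σ G hG heq
  have hsub2 : ∀ l, ∃ k, θ k = φ l :=
    subset_step A b hA hreach hr φ θ hφmem hθmem hθinj σ hσ ρ G hG heq.symm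
  choose f hf using hsub1
  choose g hg using hsub2
  have hfinj : Function.Injective f := by
    intro a b' hab
    apply hθinj
    rw [← hf a, ← hf b', hab]
  have hginj : Function.Injective g := by
    intro a b' hab
    apply hφinj
    rw [← hg a, ← hg b', hab]
  have hcard : r = s := le_antisymm
    (by simpa using Fintype.card_le_of_injective f hfinj)
    (by simpa using Fintype.card_le_of_injective g hginj)
  have hbij : Function.Bijective f :=
    (Fintype.bijective_iff_injective_and_card f).mpr ⟨hfinj, by simp [hcard]⟩
  refine ⟨Equiv.ofBijective f hbij, fun k₀ => ⟨hf k₀, ?_⟩⟩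
  -- weights
  have heq' : ∑ k, (ρ k : ℂ) • Matrix.vecMulVec (G (θ k)) (star (G (θ k)))
      = ∑ k, ((σ (f k) : ℝ) : ℂ) • Matrix.vecMulVec (G (θ k)) (star (G (θ k))) := by
    rw [heq, ← Equiv.sum_comp (Equiv.ofBijective f hbij)
      (fun l => ((σ l : ℝ) : ℂ) • Matrix.vecMulVec (G (φ l)) (star (G (φ l))))]
    apply Finset.sum_congr rfl
    intro k _
    simp only [Equiv.ofBijective_apply, hf k]
  set ζ : Fin r → ℂ := fun k => Complex.exp ((θ k : ℂ) * I) with hζ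
  have hζ1 : ∀ j, ‖ζ j‖ = 1 := fun j => by
    rw [hζ]; exact Complex.norm_exp_ofReal_mul_I _
  have hζinj : Function.Injective ζ := by
    intro a b' hab
    exact hθinj (exp_mul_I_inj (hθmem a) (hθmem b') hab)
  have hLI : LinearIndependent ℂ (fun k => G (θ k)) := by
    have := gvec_li A b hA hreach hr.le ζ hζ1 hζinj
    convert this using 1
    funext j
    rw [hG]
  obtain ⟨w, hwd⟩ := exists_dual_vec hLI k₀
  have h1 := congrArg (fun M : Matrix (Fin n) (Fin n) ℂ =>
    ∑ i, ∑ j, w i * (starRingEnd ℂ) (w j) * M i j) heq'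
  rw [quad_eval w ρ (fun k => G (θ k)), quad_eval w (fun k => σ (f k)) (fun k => G (θ k))] at h1
  rw [← Complex.ofReal_sum, ← Complex.ofReal_sum] at h1
  have hre : ∑ j, ρ j * Complex.normSq (G (θ j) ⬝ᵥ w)
      = ∑ j, σ (f j) * Complex.normSq (G (θ j) ⬝ᵥ w) := by exact_mod_cast h1
  have hcollapse : ∀ (c : Fin r → ℝ),
      ∑ j, c j * Complex.normSq (G (θ j) ⬝ᵥ w) = c k₀ := by
    intro c
    rw [Finset.sum_eq_single k₀]
    · rw [hwd k₀, if_pos rfl]; simp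
    · intro j _ hj
      rw [hwd j, if_neg hj]; simp
    · intro h; exact absurd (Finset.mem_univ k₀) h
  rw [hcollapse ρ, hcollapse (fun j => σ (f j))] at hre
  simp only [Equiv.ofBijective_apply]
  exact hre.symm
end

section
/- Feasibility direction of Theorem 2: if S̃ = Σ_{k=1}^m c̃_k G(e^{iθ_k}) d_k* with c̃_k > 0, ‖d_k‖ = 1, and distinct θ_k, then, writing G_k = G(e^{iθ_k}), the pair Z₀ = Σ_k c̃_k ‖G_k‖ d_k d_k*, Σ₀ = Σ_k c̃_k G_k G_k*/‖G_k‖ satisfies: the block matrix [[Z₀, S̃*],[S̃, Σ₀]] is positive semidefinite and (1/2)(tr Z₀ + tr Σ₀) = Σ_k c̃_k ‖G_k‖. -/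
open Matrix
open scoped ComplexOrder

lemma psd_vecMulVec_star {p : Type*} [Fintype p] [DecidableEq p] (w : p → ℂ) :
    (Matrix.vecMulVec w (star w)).PosSemidef := by
  rw [Matrix.vecMulVec_eq Unit, ← Matrix.conjTranspose_replicateCol]
  exact Matrix.posSemidef_self_mul_conjTranspose _

lemma mul_star_self' (z : ℂ) : z * star z = ((‖z‖ ^ 2 : ℝ) : ℂ) := by
  rw [show (star z) = (starRingEnd ℂ) z from rfl, Complex.mul_conj, Complex.normSq_eq_norm_sq]

lemma trace_vecMulVec_star {p : Type*} [Fintype p] [DecidableEq p] (w : p → ℂ) :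
    (Matrix.vecMulVec w (star w)).trace = ((∑ i, ‖w i‖ ^ 2 : ℝ) : ℂ) := by
  simp only [Matrix.trace, Matrix.diag, Matrix.vecMulVec_apply, Pi.star_apply, mul_star_self']
  push_cast
  rfl

lemma psd_smul_vecMulVec_star {p : Type*} [Fintype p] [DecidableEq p] (r : ℝ) (hr : 0 ≤ r)
    (w : p → ℂ) : ((r : ℂ) • Matrix.vecMulVec w (star w)).PosSemidef := by
  have : (r : ℂ) • Matrix.vecMulVec w (star w) =
      Matrix.vecMulVec ((Real.sqrt r : ℂ) • w) (star ((Real.sqrt r : ℂ) • w)) := by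
    ext i j
    simp only [Matrix.smul_apply, Matrix.vecMulVec_apply, Pi.star_apply, Pi.smul_apply,
      smul_eq_mul, star_mul', Complex.star_def, Complex.conj_ofReal]
    have : (Real.sqrt r : ℂ) * (Real.sqrt r : ℂ) = (r : ℂ) := by
      rw [← Complex.ofReal_mul, Real.mul_self_sqrt hr]
    rw [← this]; ring
  rw [this]
  exact psd_vecMulVec_star _

lemma psd_add {p : Type*} [Fintype p] {A B : Matrix p p ℂ}
    (hA : A.PosSemidef) (hB : B.PosSemidef) : (A + B).PosSemidef :=
  hA.add hB

lemma psd_sum {p : Type*} [Fintype p] {κ : Type*} (s : Finset κ)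
    (f : κ → Matrix p p ℂ) (hf : ∀ k ∈ s, (f k).PosSemidef) :
    (∑ k ∈ s, f k).PosSemidef := by
  classical
  induction s using Finset.induction_on with
  | empty => simpa using Matrix.PosSemidef.zero
  | insert _ _ h ih =>
      rw [Finset.sum_insert h]
      exact psd_add (hf _ (Finset.mem_insert_self _ _))
        (ih fun k hk => hf _ (Finset.mem_insert_of_mem hk))

theorem anm_sdp_feasibility (n L m : ℕ)
    (G : Fin m → Fin n → ℂ) (hG : ∀ k, G k ≠ 0)
    (d : Fin m → Fin L → ℂ)
    (hd : ∀ k, ∑ i, ‖d k i‖ ^ 2 = (1 : ℝ))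
    (c : Fin m → ℝ) (hc : ∀ k, 0 < c k)
    (gn : Fin m → ℝ)
    (hgn : gn = fun k => Real.sqrt (∑ i, ‖G k i‖ ^ 2))
    (St : Matrix (Fin n) (Fin L) ℂ)
    (hSt : St = ∑ k, (c k : ℂ) • Matrix.vecMulVec (G k) (star (d k)))
    (Z₀ : Matrix (Fin L) (Fin L) ℂ)
    (hZ₀ : Z₀ = ∑ k, ((c k * gn k : ℝ) : ℂ) • Matrix.vecMulVec (d k) (star (d k)))
    (Sig0 : Matrix (Fin n) (Fin n) ℂ)
    (hSig0 : Sig0 = ∑ k, ((c k / gn k : ℝ) : ℂ) • Matrix.vecMulVec (G k) (star (G k))) :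
    (Matrix.fromBlocks Z₀ Stᴴ St Sig0).PosSemidef ∧
      (1 / 2 : ℂ) * (Z₀.trace + Sig0.trace) = ∑ k, ((c k * gn k : ℝ) : ℂ) := by
  -- positivity of gn
  have hsum : ∀ k, 0 < ∑ i, ‖G k i‖ ^ 2 := by
    intro k
    obtain ⟨i, hi⟩ := Function.ne_iff.mp (hG k)
    exact Finset.sum_pos' (fun j _ => sq_nonneg _)
      ⟨i, Finset.mem_univ i, pow_pos (norm_pos_iff.mpr hi) 2⟩
  have hgnpos : ∀ k, 0 < gn k := by
    intro k; rw [hgn]; exact Real.sqrt_pos.mpr (hsum k)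
  have hgnsq : ∀ k, gn k ^ 2 = ∑ i, ‖G k i‖ ^ 2 := by
    intro k; rw [hgn]; exact Real.sq_sqrt (hsum k).le
  -- the vector
  set v : Fin m → (Fin L ⊕ Fin n) → ℂ := fun k =>
    Sum.elim (fun i => (Real.sqrt (gn k) : ℂ) * d k i)
      (fun j => ((Real.sqrt (gn k) : ℂ))⁻¹ * G k j) with hv
  have hs : ∀ k, (Real.sqrt (gn k) : ℂ) * (Real.sqrt (gn k) : ℂ) = (gn k : ℂ) := by
    intro k; rw [← Complex.ofReal_mul, Real.mul_self_sqrt (hgnpos k).le]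
  have hs0 : ∀ k, (Real.sqrt (gn k) : ℂ) ≠ 0 := by
    intro k
    simpa using (Real.sqrt_pos.mpr (hgnpos k)).ne'
  have key : Matrix.fromBlocks Z₀ Stᴴ St Sig0 =
      ∑ k, (c k : ℂ) • Matrix.vecMulVec (v k) (star (v k)) := by
    subst hSt hZ₀ hSig0
    ext i j
    rcases i with i | i <;> rcases j with j | j <;>
      simp only [Matrix.fromBlocks_apply₁₁, Matrix.fromBlocks_apply₁₂,
        Matrix.fromBlocks_apply₂₁, Matrix.fromBlocks_apply₂₂, Matrix.conjTranspose_sum,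
        Matrix.sum_apply, Matrix.conjTranspose_apply, Matrix.smul_apply,
        Matrix.vecMulVec_apply, Pi.star_apply, smul_eq_mul, hv, Sum.elim_inl, Sum.elim_inr,
        star_mul', Complex.star_def, Complex.conj_ofReal, _root_.map_mul, map_inv₀] <;>
      refine Finset.sum_congr rfl fun k _ => ?_
    · push_cast
      rw [← hs k]; ring
    · rw [Complex.conj_conj]
      field_simp
      rw [eq_div_iff (hs0 k)]
    · field_simp
      rw [eq_div_iff (hs0 k)]
    · push_cast
      rw [← hs k]
      field_simp
  constructor
  · rw [key]
    exact psd_sum _ _ fun k _ => psd_smul_vecMulVec_star (c k) (hc k).le (v k)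
  · rw [hZ₀, hSig0, Matrix.trace_sum, Matrix.trace_sum, ← Finset.sum_add_distrib,
      Finset.mul_sum]
    refine Finset.sum_congr rfl fun k _ => ?_
    rw [Matrix.trace_smul, Matrix.trace_smul, trace_vecMulVec_star, trace_vecMulVec_star,
      hd k, ← hgnsq k]
    have h0 : (gn k : ℂ) ≠ 0 := by
      exact_mod_cast (hgnpos k).ne'
    push_cast
    field_simp
    linear_combination (↑(c k) * ↑(gn k) : ℂ) * mul_inv_cancel₀ h0
end
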